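/- Let h : ℝ^d → ℝ be differentiable with L_h-Lipschitz gradient, satisfying the μ_h-PŁ condition (μ_h > 0) with attained infimum h*. Let {x^k} be the AC-GM iterates with scale parameter α = 2 and initial Lipschitz factor L_0 > 0, with ∇h(x^k) ≠ 0 for every k. With m_h := ⌈log_{3/2}(max{L_0, L_h}/L_0)⌉₊, C̄ := max{ L_h³/(4μ_h L_0²), L_h²/(4μ_h L_0), μ_h L_h/(4L_0²), μ_h/(4L_0) }, p := μ_h/(8 max{L_0, L_h}), and C_h := (1+C̄)^{m_h}/(1−p)^{m_h}, it holds for every k ≥ 0 that h(x^{k+1}) − h* ≤ C_h (1 − μ_h/(8 max{L_0, L_h}))^{k+1} (h(x^0) − h*). -/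

import Mathlib

/-! With step `1 / (2γ)` the definition of the curvature estimate `L⁺` gives the exact identity
`h x⁺ = h x - ‖∇h x‖² / (2γ) + L⁺ ‖∇h x‖² / (8γ²)`. If `L⁺ ≤ 3γ/2`, it and the PŁ inequality
contract the gap `h - h*` by `1 - μ / (8 max L₀ Lh)`; in any case `L⁺ ≤ Lh` and
`‖∇h‖² ≤ 2 Lh (h - h*)` bound its growth by `1 + Lh² / (4 L₀²)`. A step with `L⁺ > 3γ/2` raises the
running maximum `γ` by a factor `3/2`, and `γ` stays in `[L₀, max L₀ Lh]`, so at most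
`⌈log_{3/2} (max L₀ Lh / L₀)⌉₊` steps are of that kind. -/

open Set Finset InnerProductSpace

theorem card_filter_range_le_ceil_logb {g : ℕ → ℝ} (P : ℕ → Prop) [DecidablePred P]
    {r a M : ℝ} (hr : 1 < r) (ha : 0 < a) (hg0 : a ≤ g 0) (hmono : Monotone g)
    (hjump : ∀ j, P j → r * g j ≤ g (j + 1)) (hM : ∀ j, g j ≤ M) (k : ℕ) :
    #{j ∈ range k | P j} ≤ ⌈Real.logb r (M / a)⌉₊ := by
  have hgrowth : ∀ k, a * r ^ #{j ∈ range k | P j} ≤ g k := by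
    intro k
    induction k with
    | zero => simpa using hg0
    | succ k ih =>
      rw [range_add_one, filter_insert]
      split_ifs with hk
      · rw [card_insert_of_notMem (by simp), pow_succ, ← mul_assoc]
        exact (mul_le_mul_of_nonneg_right ih (by linarith)).trans
          ((mul_comm _ _).trans_le (hjump k hk))
      · exact ih.trans (hmono k.le_succ)
  have hpow : r ^ (#{j ∈ range k | P j} : ℝ) ≤ M / a := by
    rw [Real.rpow_natCast, le_div_iff₀ ha, mul_comm]
    exact (hgrowth k).trans (hM k)
  have hMa : 0 < M / a := div_pos (ha.trans_le (hg0.trans (hM 0))) ha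
  exact Nat.cast_le.mp <| ((Real.le_logb_iff_rpow_le hr hMa).mpr hpow).trans (Nat.le_ceil _)

theorem le_of_good_and_bad_steps {a : ℕ → ℝ} (P : ℕ → Prop) [DecidablePred P] {q B : ℝ}
    (hq : 0 < q) (hq1 : q ≤ 1) (hB : 1 ≤ B) (ha0 : 0 ≤ a 0)
    (hgood : ∀ k, ¬ P k → a (k + 1) ≤ q * a k) (hbad : ∀ k, P k → a (k + 1) ≤ B * a k)
    {m : ℕ} (hm : ∀ k, #{j ∈ range k | P j} ≤ m) (k : ℕ) :
    a k ≤ B ^ m / q ^ m * q ^ k * a 0 := by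
  have hsteps : ∀ k, a k * q ^ #{j ∈ range k | P j} ≤ B ^ #{j ∈ range k | P j} * q ^ k * a 0 := by
    intro k
    induction k with
    | zero => simp
    | succ k ih =>
      rw [range_add_one, filter_insert]
      split_ifs with hk
      · rw [card_insert_of_notMem (by simp), pow_succ, pow_succ, pow_succ]
        calc a (k + 1) * (q ^ #{j ∈ range k | P j} * q)
            ≤ B * a k * (q ^ #{j ∈ range k | P j} * q) := by
              gcongr; exact hbad k hk
          _ = B * q * (a k * q ^ #{j ∈ range k | P j}) := by ring
          _ ≤ B * q * (B ^ #{j ∈ range k | P j} * q ^ k * a 0) := by gcongr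
          _ = _ := by ring
      · rw [pow_succ]
        calc a (k + 1) * q ^ #{j ∈ range k | P j}
            ≤ q * a k * q ^ #{j ∈ range k | P j} := by gcongr; exact hgood k hk
          _ = q * (a k * q ^ #{j ∈ range k | P j}) := by ring
          _ ≤ q * (B ^ #{j ∈ range k | P j} * q ^ k * a 0) := by gcongr
          _ = _ := by ring
  set b := #{j ∈ range k | P j}
  have hbm : b ≤ m := hm k
  have hcoef : B ^ b / q ^ b ≤ B ^ m / q ^ m :=
    div_le_div₀ (by positivity) (pow_le_pow_right₀ hB hbm) (by positivity)
      (pow_le_pow_of_le_one hq.le hq1 hbm)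
  calc a k = a k * q ^ b / q ^ b := by field_simp
    _ ≤ B ^ b * q ^ k * a 0 / q ^ b := div_le_div_of_nonneg_right (hsteps k) (by positivity)
    _ = B ^ b / q ^ b * (q ^ k * a 0) := by ring
    _ ≤ B ^ m / q ^ m * (q ^ k * a 0) := mul_le_mul_of_nonneg_right hcoef (by positivity)
    _ = B ^ m / q ^ m * q ^ k * a 0 := by ring

section Smooth

variable {E : Type*} [NormedAddCommGroup E] [InnerProductSpace ℝ E] [CompleteSpace E]
  {h : E → ℝ} {Lh hstar : ℝ}

theorem apply_le_of_lipschitz_gradient (hdiff : Differentiable ℝ h)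
    (hLip : ∀ u v, ‖gradient h u - gradient h v‖ ≤ Lh * ‖u - v‖) (u v : E) :
    h v ≤ h u + ⟪gradient h u, v - u⟫_ℝ + Lh / 2 * ‖v - u‖ ^ 2 := by
  set w := v - u
  -- `h` along the segment minus its quadratic model is antitone for `t ≥ 0`
  let φ : ℝ → ℝ := fun t => h (u + t • w) - t * ⟪gradient h u, w⟫_ℝ - Lh / 2 * t ^ 2 * ‖w‖ ^ 2
  have hφ : ∀ t, HasDerivAt φ
      (⟪gradient h (u + t • w), w⟫_ℝ - ⟪gradient h u, w⟫_ℝ - Lh * t * ‖w‖ ^ 2) t := by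
    intro t
    have hline : HasDerivAt (fun s : ℝ => u + s • w) w t := by
      simpa using ((hasDerivAt_id t).smul_const w).const_add u
    have hcomp : HasDerivAt (fun s => h (u + s • w)) ⟪gradient h (u + t • w), w⟫_ℝ t :=
      (hdiff _).hasGradientAt.hasFDerivAt.comp_hasDerivAt t hline
    exact ((hcomp.sub ((hasDerivAt_id t).mul_const _)).sub
      (((hasDerivAt_pow 2 t).const_mul (Lh / 2)).mul_const (‖w‖ ^ 2))).congr_deriv
      (by push_cast; ring)
  have hφ'_nonpos : ∀ t ∈ interior (Ici (0 : ℝ)),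
      ⟪gradient h (u + t • w), w⟫_ℝ - ⟪gradient h u, w⟫_ℝ - Lh * t * ‖w‖ ^ 2 ≤ 0 := by
    intro t ht
    rw [interior_Ici, Set.mem_Ioi] at ht
    have hgrad : ‖gradient h (u + t • w) - gradient h u‖ ≤ Lh * t * ‖w‖ := by
      simpa [norm_smul, abs_of_pos ht, mul_assoc] using hLip (u + t • w) u
    have := (real_inner_le_norm _ w).trans (mul_le_mul_of_nonneg_right hgrad (norm_nonneg w))
    rw [inner_sub_left] at this
    nlinarith
  have hanti : AntitoneOn φ (Ici 0) :=
    antitoneOn_of_hasDerivWithinAt_nonpos (convex_Ici 0)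
      (fun t _ => (hφ t).continuousAt.continuousWithinAt) (fun t _ => (hφ t).hasDerivWithinAt)
      hφ'_nonpos
  have := hanti Set.self_mem_Ici (Set.mem_Ici.mpr zero_le_one) zero_le_one
  simp only [φ, one_smul, zero_smul, add_zero, w, add_sub_cancel] at this
  linarith

theorem apply_sub_smul_gradient_le (hdiff : Differentiable ℝ h)
    (hLip : ∀ u v, ‖gradient h u - gradient h v‖ ≤ Lh * ‖u - v‖) (u : E) (t : ℝ) :
    h (u - t • gradient h u) ≤ h u - (t - Lh / 2 * t ^ 2) * ‖gradient h u‖ ^ 2 := by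
  have := apply_le_of_lipschitz_gradient hdiff hLip u (u - t • gradient h u)
  rw [sub_sub_cancel_left, inner_neg_right, real_inner_smul_right, real_inner_self_eq_norm_sq,
    norm_neg, norm_smul, mul_pow, Real.norm_eq_abs, sq_abs] at this
  linarith

theorem lipschitz_const_pos_of_gradient_ne_zero (hdiff : Differentiable ℝ h)
    (hLip : ∀ u v, ‖gradient h u - gradient h v‖ ≤ Lh * ‖u - v‖) (hlow : ∀ x, hstar ≤ h x)
    {u : E} (hu : gradient h u ≠ 0) : 0 < Lh := by
  -- otherwise `h` would decrease without bound along `-∇h u`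
  by_contra! hLh
  have hn : 0 < ‖gradient h u‖ ^ 2 := by positivity
  set t := (h u - hstar + 1) / ‖gradient h u‖ ^ 2
  have hstep := apply_sub_smul_gradient_le hdiff hLip u t
  have htn : t * ‖gradient h u‖ ^ 2 = h u - hstar + 1 := div_mul_cancel₀ _ hn.ne'
  have : 0 ≤ -(Lh / 2) * t ^ 2 * ‖gradient h u‖ ^ 2 :=
    mul_nonneg (mul_nonneg (by linarith) (sq_nonneg t)) hn.le
  linarith [hlow (u - t • gradient h u)]

theorem sq_norm_gradient_le (hdiff : Differentiable ℝ h)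
    (hLip : ∀ u v, ‖gradient h u - gradient h v‖ ≤ Lh * ‖u - v‖) (hlow : ∀ x, hstar ≤ h x)
    (hLh : 0 < Lh) (u : E) : ‖gradient h u‖ ^ 2 ≤ 2 * Lh * (h u - hstar) := by
  have hstep := apply_sub_smul_gradient_le hdiff hLip u (1 / Lh)
  have hcoef : 1 / Lh - Lh / 2 * (1 / Lh) ^ 2 = 1 / (2 * Lh) := by field_simp; ring
  rw [hcoef] at hstep
  have hdecr : 1 / (2 * Lh) * ‖gradient h u‖ ^ 2 ≤ h u - hstar := by
    linarith [hlow (u - (1 / Lh) • gradient h u)]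
  calc ‖gradient h u‖ ^ 2 = 2 * Lh * (1 / (2 * Lh) * ‖gradient h u‖ ^ 2) := by field_simp
    _ ≤ 2 * Lh * (h u - hstar) := by gcongr

theorem pl_const_le_lipschitz_const {μh : ℝ} (hdiff : Differentiable ℝ h)
    (hLip : ∀ u v, ‖gradient h u - gradient h v‖ ≤ Lh * ‖u - v‖) (hlow : ∀ x, hstar ≤ h x)
    (hPL : ∀ x, 2 * μh * (h x - hstar) ≤ ‖gradient h x‖ ^ 2) {u : E} (hu : gradient h u ≠ 0) :
    μh ≤ Lh := by
  have hLh := lipschitz_const_pos_of_gradient_ne_zero hdiff hLip hlow hu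
  have hub := sq_norm_gradient_le hdiff hLip hlow hLh u
  have hn : 0 < ‖gradient h u‖ ^ 2 := by positivity
  have hgap : 0 < h u - hstar := by nlinarith
  nlinarith [hPL u]

noncomputable def curvatureEstimate (h : E → ℝ) (u v : E) : ℝ :=
  2 * (h v - h u - ⟪gradient h u, v - u⟫_ℝ) / ‖v - u‖ ^ 2

theorem apply_eq_add_curvatureEstimate {u v : E} (huv : u ≠ v) :
    h v = h u + ⟪gradient h u, v - u⟫_ℝ + curvatureEstimate h u v / 2 * ‖v - u‖ ^ 2 := by
  have hn : ‖v - u‖ ^ 2 ≠ 0 := by simpa [sub_eq_zero] using huv.symm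
  rw [curvatureEstimate, div_right_comm, mul_div_cancel_left₀ _ two_ne_zero,
    div_mul_cancel₀ _ hn]
  ring

theorem curvatureEstimate_le (hdiff : Differentiable ℝ h)
    (hLip : ∀ u v, ‖gradient h u - gradient h v‖ ≤ Lh * ‖u - v‖) {u v : E} (huv : u ≠ v) :
    curvatureEstimate h u v ≤ Lh := by
  have hpos : 0 < ‖v - u‖ ^ 2 := pow_pos (norm_pos_iff.mpr (sub_ne_zero.mpr huv.symm)) 2
  have := apply_le_of_lipschitz_gradient hdiff hLip u v
  rw [apply_eq_add_curvatureEstimate (h := h) huv] at this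
  nlinarith

theorem apply_sub_smul_gradient_eq {u : E} {s : ℝ} (hs : s ≠ 0) (hu : gradient h u ≠ 0) :
    h (u - s • gradient h u) = h u - s * ‖gradient h u‖ ^ 2
      + curvatureEstimate h u (u - s • gradient h u) / 2 * s ^ 2 * ‖gradient h u‖ ^ 2 := by
  have huv : u ≠ u - s • gradient h u := by simpa [eq_comm (a := u)] using ⟨hs, hu⟩
  rw [apply_eq_add_curvatureEstimate (h := h) huv, sub_sub_cancel_left, inner_neg_right,
    real_inner_smul_right, real_inner_self_eq_norm_sq, norm_neg, norm_smul, mul_pow,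
    Real.norm_eq_abs, sq_abs]
  ring

theorem apply_sub_smul_gradient_sub_le_of_curvatureEstimate_le {μh γ M : ℝ} (hμ : 0 ≤ μh)
    (hlow : ∀ x, hstar ≤ h x) (hPL : ∀ x, 2 * μh * (h x - hstar) ≤ ‖gradient h x‖ ^ 2)
    (hγ : 0 < γ) (hγM : γ ≤ M) {u : E} (hu : gradient h u ≠ 0)
    (hcurv : curvatureEstimate h u (u - (1 / (2 * γ)) • gradient h u) ≤ 3 / 2 * γ) :
    h (u - (1 / (2 * γ)) • gradient h u) - hstar ≤ (1 - μh / (8 * M)) * (h u - hstar) := by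
  set s := 1 / (2 * γ)
  set n := ‖gradient h u‖ ^ 2
  have hs : 0 < s := by positivity
  have hγs : γ * s = 1 / 2 := by simp only [s]; field_simp
  have hgap := sub_nonneg.mpr (hlow u)
  have hquad : curvatureEstimate h u (u - s • gradient h u) / 2 * s ^ 2 * n ≤ 3 / 8 * s * n := by
    have : curvatureEstimate h u (u - s • gradient h u) / 2 * s ^ 2 ≤ 3 / 8 * s := by nlinarith
    exact mul_le_mul_of_nonneg_right this (by positivity)
  have hPLu : 5 / 8 * s * (2 * μh * (h u - hstar)) ≤ 5 / 8 * s * n :=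
    mul_le_mul_of_nonneg_left (hPL u) (by positivity)
  have hrate : μh / (8 * M) ≤ 5 / 4 * s * μh := by
    have hsM : 1 / (8 * M) ≤ s := one_div_le_one_div_of_le (by positivity) (by linarith)
    rw [div_eq_mul_one_div]; nlinarith
  calc h (u - s • gradient h u) - hstar
      = h u - hstar - s * n + curvatureEstimate h u (u - s • gradient h u) / 2 * s ^ 2 * n := by
        rw [apply_sub_smul_gradient_eq hs.ne' hu]; ring
    _ ≤ (1 - 5 / 4 * s * μh) * (h u - hstar) := by linarith
    _ ≤ (1 - μh / (8 * M)) * (h u - hstar) := by gcongr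

theorem apply_sub_smul_gradient_sub_le {L₀ γ : ℝ} (hdiff : Differentiable ℝ h)
    (hLip : ∀ u v, ‖gradient h u - gradient h v‖ ≤ Lh * ‖u - v‖) (hlow : ∀ x, hstar ≤ h x)
    (hLh : 0 < Lh) (hL₀ : 0 < L₀) (hγ : L₀ ≤ γ) {u : E} (hu : gradient h u ≠ 0) :
    h (u - (1 / (2 * γ)) • gradient h u) - hstar ≤ (1 + Lh ^ 2 / (4 * L₀ ^ 2)) * (h u - hstar) := by
  have hγ0 : 0 < γ := hL₀.trans_le hγ
  set s := 1 / (2 * γ)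
  set n := ‖gradient h u‖ ^ 2
  have hs : 0 < s := by positivity
  have hs2 : s ^ 2 ≤ 1 / (4 * L₀ ^ 2) := by
    rw [div_pow, one_pow, mul_pow]
    exact one_div_le_one_div_of_le (by positivity) (by nlinarith)
  have hne : u ≠ u - s • gradient h u := by simpa [eq_comm (a := u)] using ⟨hs.ne', hu⟩
  have hcurv := curvatureEstimate_le hdiff hLip hne
  have hn := sq_norm_gradient_le hdiff hLip hlow hLh u
  have hsn : 0 ≤ s * n := by positivity
  calc h (u - s • gradient h u) - hstar
      = h u - hstar - s * n + curvatureEstimate h u (u - s • gradient h u) / 2 * s ^ 2 * n := by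
        rw [apply_sub_smul_gradient_eq hs.ne' hu]; ring
    _ ≤ h u - hstar + Lh / 2 * (1 / (4 * L₀ ^ 2)) * (2 * Lh * (h u - hstar)) := by
        have : curvatureEstimate h u (u - s • gradient h u) / 2 * s ^ 2 * n
            ≤ Lh / 2 * (1 / (4 * L₀ ^ 2)) * (2 * Lh * (h u - hstar)) := by gcongr
        linarith
    _ = (1 + Lh ^ 2 / (4 * L₀ ^ 2)) * (h u - hstar) := by field_simp

end Smooth

section ACGM

variable {E : Type*} [NormedAddCommGroup E] [InnerProductSpace ℝ E] [CompleteSpace E]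
  {h : E → ℝ} {α Lh μh hstar L₀ : ℝ} {x : ℕ → E} {L : ℕ → ℝ}

/-- The paper's `γ_{k+1} = max {L₀, …, L_k}` is `partialSups L k`. -/
structure IsACGM (h : E → ℝ) (α L₀ : ℝ) (x : ℕ → E) (L : ℕ → ℝ) : Prop where
  init : L 0 = L₀
  step : ∀ k, x (k + 1) = x k - (1 / (α * partialSups L k)) • gradient h (x k)
  curvature : ∀ k, L (k + 1) = curvatureEstimate h (x k) (x (k + 1))

namespace IsACGM

theorem init_le_partialSups (hA : IsACGM h α L₀ x L) (k : ℕ) : L₀ ≤ partialSups L k :=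
  hA.init ▸ le_partialSups_of_le L k.zero_le

theorem le_max (hA : IsACGM h α L₀ x L) (hdiff : Differentiable ℝ h)
    (hLip : ∀ u v, ‖gradient h u - gradient h v‖ ≤ Lh * ‖u - v‖) (hα : 0 < α) (hL₀ : 0 < L₀)
    (hgrad : ∀ k, gradient h (x k) ≠ 0) (j : ℕ) : L j ≤ max L₀ Lh := by
  rcases j with _ | k
  · exact hA.init ▸ le_max_left _ _
  · have hγ := hL₀.trans_le (hA.init_le_partialSups k)
    have hne : x k ≠ x (k + 1) := by
      rw [hA.step k]
      exact fun heq => smul_ne_zero (by positivity) (hgrad k) (sub_eq_self.mp heq.symm)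
    rw [hA.curvature k]
    exact (curvatureEstimate_le hdiff hLip hne).trans (le_max_right _ _)

theorem card_filter_lt_le (hA : IsACGM h α L₀ x L) (hdiff : Differentiable ℝ h)
    (hLip : ∀ u v, ‖gradient h u - gradient h v‖ ≤ Lh * ‖u - v‖) (hα : 0 < α) (hL₀ : 0 < L₀)
    (hgrad : ∀ k, gradient h (x k) ≠ 0) {r : ℝ} (hr : 1 < r) (k : ℕ) :
    #{j ∈ range k | r * partialSups L j < L (j + 1)} ≤ ⌈Real.logb r (max L₀ Lh / L₀)⌉₊ :=
  card_filter_range_le_ceil_logb (fun j => r * partialSups L j < L (j + 1)) hr hL₀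
    (hA.init_le_partialSups 0) (partialSups L).monotone
    (fun j hj => hj.le.trans (le_partialSups L (j + 1)))
    (fun i => partialSups_le L i _ fun j _ => hA.le_max hdiff hLip hα hL₀ hgrad j) k

theorem sub_le_mul_pow (hA : IsACGM h 2 L₀ x L) (hdiff : Differentiable ℝ h)
    (hLip : ∀ u v, ‖gradient h u - gradient h v‖ ≤ Lh * ‖u - v‖) (hlow : ∀ x, hstar ≤ h x)
    (hPL : ∀ x, 2 * μh * (h x - hstar) ≤ ‖gradient h x‖ ^ 2) (hμ : 0 ≤ μh) (hL₀ : 0 < L₀)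
    (hgrad : ∀ k, gradient h (x k) ≠ 0) (k : ℕ) :
    h (x k) - hstar ≤
      (1 + Lh ^ 2 / (4 * L₀ ^ 2)) ^ ⌈Real.logb (3 / 2) (max L₀ Lh / L₀)⌉₊ /
        (1 - μh / (8 * max L₀ Lh)) ^ ⌈Real.logb (3 / 2) (max L₀ Lh / L₀)⌉₊ *
        (1 - μh / (8 * max L₀ Lh)) ^ k * (h (x 0) - hstar) := by
  have hLh := lipschitz_const_pos_of_gradient_ne_zero hdiff hLip hlow (hgrad 0)
  have hμLh := pl_const_le_lipschitz_const hdiff hLip hlow hPL (hgrad 0)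
  have hM : Lh ≤ max L₀ Lh := le_max_right _ _
  have hp1 : μh / (8 * max L₀ Lh) < 1 := by
    rw [div_lt_one (by positivity)]; linarith
  refine le_of_good_and_bad_steps (a := fun k => h (x k) - hstar) _ (by linarith)
    (by simp only [sub_le_self_iff]; positivity)
    (by simp only [le_add_iff_nonneg_right]; positivity)
    (sub_nonneg.mpr (hlow _)) (fun j hj => ?_) (fun j _ => ?_)
    (hA.card_filter_lt_le hdiff hLip two_pos hL₀ hgrad (by norm_num)) k
  · have hγ := hL₀.trans_le (hA.init_le_partialSups j)
    rw [hA.step j]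
    refine apply_sub_smul_gradient_sub_le_of_curvatureEstimate_le hμ hlow hPL hγ
      (partialSups_le L j _ fun i _ => hA.le_max hdiff hLip two_pos hL₀ hgrad i) (hgrad j) ?_
    rw [← hA.step j, ← hA.curvature j]
    exact not_lt.mp hj
  · rw [hA.step j]
    exact apply_sub_smul_gradient_sub_le hdiff hLip hlow hLh hL₀ (hA.init_le_partialSups j)
      (hgrad j)

end IsACGM

end ACGM

theorem acgm_linear_rate_alpha_two_general
    {d : ℕ} (h : EuclideanSpace ℝ (Fin d) → ℝ) (hdiff : Differentiable ℝ h)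
    (Lh μh : ℝ) (hμ : 0 < μh)
    (hLip : ∀ u v, ‖gradient h u - gradient h v‖ ≤ Lh * ‖u - v‖)
    (hstar : ℝ) (hlow : ∀ x, hstar ≤ h x)
    (hPL : ∀ x, 2 * μh * (h x - hstar) ≤ ‖gradient h x‖ ^ 2)
    (L₀ : ℝ) (hL₀ : 0 < L₀)
    (x : ℕ → EuclideanSpace ℝ (Fin d)) (L γ : ℕ → ℝ)
    (hL0 : L 0 = L₀)
    (hγ : ∀ k : ℕ, γ (k + 1) =
      (Finset.range (k + 1)).sup' (Finset.nonempty_range_iff.mpr (Nat.succ_ne_zero k)) L)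
    (hx : ∀ k : ℕ, x (k + 1) = x k - (1 / (2 * γ (k + 1))) • gradient h (x k))
    (hL : ∀ k : ℕ, L (k + 1) =
      2 * (h (x (k + 1)) - h (x k)
        - (inner ℝ (gradient h (x k)) (x (k + 1) - x k) : ℝ)) / ‖x (k + 1) - x k‖ ^ 2)
    (hgrad : ∀ k : ℕ, gradient h (x k) ≠ 0)
    (p Cbar Ch : ℝ) (mh : ℕ)
    (hp : p = μh / (8 * max L₀ Lh))
    (hmh : mh = ⌈Real.logb (3 / 2) (max L₀ Lh / L₀)⌉₊)
    (hCbar : Cbar = max (max (Lh ^ 3 / (4 * μh * L₀ ^ 2)) (Lh ^ 2 / (4 * μh * L₀)))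
      (max (μh * Lh / (4 * L₀ ^ 2)) (μh / (4 * L₀))))
    (hCh : Ch = (1 + Cbar) ^ mh / (1 - p) ^ mh) :
    ∀ k : ℕ, h (x (k + 1)) - hstar ≤
      Ch * (1 - μh / (8 * max L₀ Lh)) ^ (k + 1) * (h (x 0) - hstar) := by
  have hA : IsACGM h 2 L₀ x L :=
    ⟨hL0, fun k => by rw [hx k, hγ k, partialSups_eq_sup'_range], hL⟩
  have hLh := lipschitz_const_pos_of_gradient_ne_zero hdiff hLip hlow (hgrad 0)
  have hμLh := pl_const_le_lipschitz_const hdiff hLip hlow hPL (hgrad 0)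
  have hp1 : p < 1 := by
    rw [hp, div_lt_one (by positivity)]; linarith [le_max_right L₀ Lh]
  have hCbar_ge : Lh ^ 2 / (4 * L₀ ^ 2) ≤ Cbar := by
    refine le_trans ?_ (hCbar ▸ (le_max_left _ _).trans (le_max_left _ _))
    rw [div_le_div_iff₀ (by positivity) (by positivity)]
    nlinarith [mul_nonneg (mul_nonneg (sub_nonneg.mpr hμLh) (sq_nonneg Lh)) (sq_nonneg L₀)]
  intro k
  calc h (x (k + 1)) - hstar
      ≤ (1 + Lh ^ 2 / (4 * L₀ ^ 2)) ^ mh / (1 - p) ^ mh * (1 - p) ^ (k + 1) * (h (x 0) - hstar) :=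
        hp ▸ hmh ▸ hA.sub_le_mul_pow hdiff hLip hlow hPL hμ.le hL₀ hgrad (k + 1)
    _ ≤ Ch * (1 - μh / (8 * max L₀ Lh)) ^ (k + 1) * (h (x 0) - hstar) := by
        rw [hCh, ← hp]
        have hgap₀ := sub_nonneg.mpr (hlow (x 0))
        gcongr

/-- AC-GM with `α = 2`: optimal linear rate.
With scale parameter `α = 2`, AC-GM on a `μh`-PŁ function with `Lh`-Lipschitz gradient
satisfies `h (x (k+1)) - hstar ≤ C_h (1 - μh / (8 max{L₀, Lh}))^(k+1) (h (x 0) - hstar)`. -/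
theorem acgm_linear_rate_alpha_two
    {d : ℕ} (h : EuclideanSpace ℝ (Fin d) → ℝ) (hdiff : Differentiable ℝ h)
    (Lh μh : ℝ) (hμ : 0 < μh)
    (hLip : ∀ u v, ‖gradient h u - gradient h v‖ ≤ Lh * ‖u - v‖)
    (hstar : ℝ) (hlow : ∀ x, hstar ≤ h x) (hatt : ∃ x, h x = hstar)
    (hPL : ∀ x, 2 * μh * (h x - hstar) ≤ ‖gradient h x‖ ^ 2)
    (L₀ : ℝ) (hL₀ : 0 < L₀)
    (x : ℕ → EuclideanSpace ℝ (Fin d)) (L γ : ℕ → ℝ)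
    (hL0 : L 0 = L₀)
    (hγ : ∀ k : ℕ, γ (k + 1) =
      (Finset.range (k + 1)).sup' (Finset.nonempty_range_iff.mpr (Nat.succ_ne_zero k)) L)
    (hx : ∀ k : ℕ, x (k + 1) = x k - (1 / (2 * γ (k + 1))) • gradient h (x k))
    (hL : ∀ k : ℕ, L (k + 1) =
      2 * (h (x (k + 1)) - h (x k)
        - (inner ℝ (gradient h (x k)) (x (k + 1) - x k) : ℝ)) / ‖x (k + 1) - x k‖ ^ 2)
    (hgrad : ∀ k : ℕ, gradient h (x k) ≠ 0)
    (p Cbar Ch : ℝ) (mh : ℕ)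
    (hp : p = μh / (8 * max L₀ Lh))
    (hmh : mh = ⌈Real.logb (3 / 2) (max L₀ Lh / L₀)⌉₊)
    (hCbar : Cbar = max (max (Lh ^ 3 / (4 * μh * L₀ ^ 2)) (Lh ^ 2 / (4 * μh * L₀)))
      (max (μh * Lh / (4 * L₀ ^ 2)) (μh / (4 * L₀))))
    (hCh : Ch = (1 + Cbar) ^ mh / (1 - p) ^ mh) :
    ∀ k : ℕ, h (x (k + 1)) - hstar ≤
      Ch * (1 - μh / (8 * max L₀ Lh)) ^ (k + 1) * (h (x 0) - hstar) :=
  acgm_linear_rate_alpha_two_general h hdiff Lh μh hμ hLip hstar hlow hPL L₀ hL₀ x L γ hL0 hγ hx hL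
    hgrad p Cbar Ch mh hp hmh hCbar hCh
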